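/- (Identity Principle on real-connected slice-domains) Let Ω ⊆ ℍ be a real-connected slice-domain and let f, g : Ω → ℍ be slice regular. If there exists I ∈ 𝕊 such that f and g coincide on a subset of Ω ∩ ℂ_I having an accumulation point in Ω ∩ ℂ_I, then f = g on all of Ω. -/

import Mathlib

noncomputable section

abbrev Hq := Quaternion ℝ

/-- The sphere of imaginary units of the quaternions. -/
def SphereS : Set Hq := {q | q ^ 2 = -1}

/-- The identification of `ℂ` with the slice plane `ℂ_I = ℝ + ℝI`. -/
def sliceEmb (I : Hq) : ℂ → Hq := fun z => (z.re : Hq) + (z.im : Hq) * I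

/-- The slice complex plane `ℂ_I = ℝ + ℝI`. -/
def sliceC (I : Hq) : Set Hq := Set.range (sliceEmb I)

/-- The slice-topology on the quaternions: the quotient topology induced by the
canonical map from the disjoint union of the slices, i.e. the supremum of the
topologies coinduced by the parametrizations of the slices. -/
def sliceTopology : TopologicalSpace Hq :=
  ⨆ I ∈ SphereS, TopologicalSpace.coinduced (sliceEmb I) inferInstance

/-- The real line inside the quaternions. -/
def realLine : Set Hq := Set.range (fun x : ℝ => (x : Hq))

/-- `g : ℂ → ℍ` (thought of as a function on the slice `ℂ_I`) is (left) holomorphic on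
`U`: real differentiable with `∂ₓ g + I ∂_y g = 0`. -/
def SliceHolomorphicOn (I : Hq) (g : ℂ → Hq) (U : Set ℂ) : Prop :=
  ∀ z ∈ U, ∃ L : ℂ →L[ℝ] Hq, HasFDerivAt g L z ∧ L 1 + I * L Complex.I = 0

/-- A function on a slice-open set is slice regular if it is holomorphic on each slice. -/
def SliceRegular (f : Hq → Hq) (Ω : Set Hq) : Prop :=
  ∀ I ∈ SphereS, SliceHolomorphicOn I (f ∘ sliceEmb I) (sliceEmb I ⁻¹' Ω)

/-- `K(m)` for `K ∈ 𝕊^N` (with `K 0 = 1` by convention) and `1 ≤ m ≤ 2^N`: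
`∏_{i=N}^{1} (K_i K_{i-1})^{m_i}` where `(m_N … m_1)₂` is the binary expansion of `m-1`. -/
def zetaTerm (K : ℕ → Hq) (N m : ℕ) : Hq :=
  ((List.range N).reverse.map
    (fun j => (K (j + 1) * K j) ^ (if Nat.testBit (m - 1) j then 1 else 0))).prod

/-- The matrix `σ_N` (0-indexed): entry `(i,j)` is `(-1)^{N+(j+1)}` if
`(i+1)+(j+1) = 2^N + 1`, and `0` otherwise. -/
def sigmaMat (N : ℕ) : Matrix (Fin (2 ^ N)) (Fin (2 ^ N)) ℝ :=
  Matrix.of fun i j =>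
    if (i : ℕ) + (j : ℕ) = 2 ^ N - 1 then (-1 : ℝ) ^ (N + (j : ℕ) + 1) else 0

def QOrth (I J : Hq) : Prop := (I * star J).re = 0

/-!
On a slice `ℂ_J` the equation `∂ₓ + J ∂_y = 0` says that the real differential is left
`ℂ_J`-linear, so a slice regular function restricted to `Ω ∩ ℂ_J` is holomorphic as a map into `ℍ`,
made a complex vector space by left multiplication through `ℂ_J`, and the classical identity
principle applies on each component of `Ω ∩ ℂ_J`. Distinct slices meet only along `ℝ` (and
`ℂ_{-J} = ℂ_J`), so a component of `Ω ∩ ℂ_J` missing the real axis is slice-clopen in `Ω`, hence all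
of `Ω`. Otherwise every such component meets `ℝ`; by real-connectedness all real points of `Ω` lie
in the component of `z₀` in `Ω ∩ ℂ_I`, where `f - g` vanishes, and from `Ω ∩ ℝ` the identity
principle spreads the zeros over every slice.
-/

open Filter Set Topology Quaternion ComplexConjugate

lemma mem_sphereS_iff {J : Hq} : J ∈ SphereS ↔ J.re = 0 ∧ ‖J‖ = 1 := by
  have hsq : J ^ 2 = -((Quaternion.normSq J : ℝ) : Hq) ↔ J.re = 0 := Quaternion.sq_eq_neg_normSq
  rw [normSq_eq_norm_mul_self] at hsq
  constructor
  · intro hJ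
    have h1 : ‖J‖ = 1 := (pow_eq_one_iff_of_nonneg (norm_nonneg J) two_ne_zero).mp <| by
      rw [← norm_pow, hJ.out, norm_neg, norm_one]
    exact ⟨hsq.mp (by rw [hJ.out, h1]; simp), h1⟩
  · rintro ⟨hre, hnorm⟩
    show J ^ 2 = -1
    rw [hsq.mpr hre, hnorm]; simp

lemma mul_self_eq_neg_one_of_mem_sphereS {J : Hq} (hJ : J ∈ SphereS) : J * J = -1 := by
  rw [← sq]; exact hJ

@[simp]
lemma sliceEmb_ofReal (J : Hq) (x : ℝ) : sliceEmb J x = x := by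
  simp [sliceEmb]

lemma sliceEmb_neg (J : Hq) (z : ℂ) : sliceEmb (-J) z = sliceEmb J (conj z) := by
  simp only [sliceEmb, Complex.conj_re, Complex.conj_im]
  push_cast
  noncomm_ring

lemma im_sliceEmb {J : Hq} (hJ : J ∈ SphereS) (z : ℂ) : (sliceEmb J z).im = z.im • J := by
  have hJim : J.im = J := by
    rw [← re_add_im J]
    simp [(mem_sphereS_iff.mp hJ).1]
  simp [sliceEmb, coe_mul_eq_smul, hJim]

def sliceAlgHom (J : SphereS) : ℂ →ₐ[ℝ] Hq :=
  Complex.liftAux J (mul_self_eq_neg_one_of_mem_sphereS J.2)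

lemma sliceAlgHom_apply (J : SphereS) (z : ℂ) : sliceAlgHom J z = sliceEmb J z := by
  simp [sliceAlgHom, Complex.liftAux_apply, sliceEmb, coe_mul_eq_smul, Quaternion.algebraMap_def]

lemma sliceEmb_injective {J : Hq} (hJ : J ∈ SphereS) : Function.Injective (sliceEmb J) :=
  fun _ _ h => (sliceAlgHom ⟨J, hJ⟩).toRingHom.injective (by simpa [sliceAlgHom_apply] using h)

lemma normSq_sliceEmb {J : Hq} (hJ : J ∈ SphereS) (z : ℂ) :
    Quaternion.normSq (sliceEmb J z) = Complex.normSq z := by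
  have hstar : star (sliceEmb J z) = sliceEmb J (conj z) := by
    rw [← sliceEmb_neg, sliceEmb, sliceEmb, star_add, star_mul, star_coe, star_coe,
      star_eq_neg.mpr (mem_sphereS_iff.mp hJ).1, mul_neg, neg_mul, coe_commutes]
  apply coe_injective
  rw [← self_mul_star, hstar, ← sliceAlgHom_apply ⟨J, hJ⟩, ← sliceAlgHom_apply ⟨J, hJ⟩, ← map_mul,
    Complex.mul_conj, sliceAlgHom_apply]
  simp

lemma norm_sliceEmb {J : Hq} (hJ : J ∈ SphereS) (z : ℂ) : ‖sliceEmb J z‖ = ‖z‖ := by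
  have h := normSq_sliceEmb hJ z
  rw [normSq_eq_norm_mul_self, Complex.normSq_eq_norm_sq, sq] at h
  exact (mul_self_inj (norm_nonneg _) (norm_nonneg _)).mp h

lemma eq_or_eq_neg_of_sliceEmb_eq {J K : Hq} (hJ : J ∈ SphereS) (hK : K ∈ SphereS) {z w : ℂ}
    (h : sliceEmb K w = sliceEmb J z) (hz : z.im ≠ 0) : K = J ∨ K = -J := by
  have him : w.im • K = z.im • J := by rw [← im_sliceEmb hK, ← im_sliceEmb hJ, h]
  have habs : |w.im| = |z.im| := by
    simpa [norm_smul, (mem_sphereS_iff.mp hJ).2, (mem_sphereS_iff.mp hK).2] using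
      congrArg norm him
  rcases abs_eq_abs.mp habs with hw | hw
  · rw [hw] at him
    exact Or.inl (smul_right_injective Hq hz him)
  · rw [hw, neg_smul, ← smul_neg] at him
    exact Or.inr (neg_eq_iff_eq_neg.mp (smul_right_injective Hq hz him))

lemma sliceEmb_eq_ofReal_iff {J : Hq} (hJ : J ∈ SphereS) {z : ℂ} {x : ℝ} :
    sliceEmb J z = x ↔ z = x :=
  ⟨fun h => sliceEmb_injective hJ (h.trans (sliceEmb_ofReal J x).symm),
    fun h => h ▸ sliceEmb_ofReal J x⟩

lemma exists_sliceEmb_eq (q : Hq) : ∃ J ∈ SphereS, ∃ z : ℂ, sliceEmb J z = q := by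
  by_cases him : q.im = 0
  · have hunit : ((Complex.I : ℂ) : Hq) ∈ SphereS := by
      show ((Complex.I : ℂ) : Hq) ^ 2 = -1
      ext <;> simp [sq]
    refine ⟨_, hunit, q.re, ?_⟩
    rw [sliceEmb_ofReal, ← re_add_im q, him, add_zero, re_coe]
  · refine ⟨‖q.im‖⁻¹ • q.im, mem_sphereS_iff.mpr ⟨by simp, norm_smul_inv_norm him⟩,
      ⟨q.re, ‖q.im‖⟩, ?_⟩
    rw [sliceEmb, coe_mul_eq_smul, smul_inv_smul₀ (norm_ne_zero_iff.mpr him), re_add_im]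

lemma isOpen_sliceTopology_iff {V : Set Hq} :
    IsOpen[sliceTopology] V ↔ ∀ J ∈ SphereS, IsOpen (sliceEmb J ⁻¹' V) := by
  unfold sliceTopology
  simp only [isOpen_iSup_iff, isOpen_coinduced]

lemma isOpen_sliceTopology_of_preimage {X : Set Hq} {J : Hq} (hXJ : IsOpen (sliceEmb J ⁻¹' X))
    (hXK : ∀ K ∈ SphereS, K ≠ J → K ≠ -J → IsOpen (sliceEmb K ⁻¹' X)) :
    IsOpen[sliceTopology] X := by
  refine isOpen_sliceTopology_iff.mpr fun K hK => ?_
  by_cases hKJ : K = J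
  · rwa [hKJ]
  by_cases hKJ' : K = -J
  · have : sliceEmb (-J) ⁻¹' X = conj ⁻¹' (sliceEmb J ⁻¹' X) := by ext; simp [sliceEmb_neg]
    rw [hKJ', this]
    exact hXJ.preimage Complex.continuous_conj
  · exact hXK K hK hKJ hKJ'

lemma IsOpen.sdiff_connectedComponentIn {X : Type*} [TopologicalSpace X] [LocallyConnectedSpace X]
    {U : Set X} (hU : IsOpen U) (x : X) : IsOpen (U \ connectedComponentIn U x) := by
  refine isOpen_iff_forall_mem_open.mpr fun y ⟨hyU, hyC⟩ => ⟨connectedComponentIn U y,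
    fun z hz => ⟨connectedComponentIn_subset U y hz, fun hzC => hyC ?_⟩,
    hU.connectedComponentIn, mem_connectedComponentIn hyU⟩
  rw [connectedComponentIn_eq hzC, ← connectedComponentIn_eq hz]
  exact mem_connectedComponentIn hyU

lemma subset_sliceEmb_image_connectedComponentIn {Ω : Set Hq}
    (hopen : IsOpen[sliceTopology] Ω) (hconn : @IsPreconnected Hq sliceTopology Ω)
    {J : Hq} (hJ : J ∈ SphereS) {z : ℂ} (hz : z ∈ sliceEmb J ⁻¹' Ω)
    (hC : ∀ x : ℝ, (x : ℂ) ∉ connectedComponentIn (sliceEmb J ⁻¹' Ω) z) :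
    Ω ⊆ sliceEmb J '' connectedComponentIn (sliceEmb J ⁻¹' Ω) z := by
  set C := connectedComponentIn (sliceEmb J ⁻¹' Ω) z
  have hCim : ∀ u ∈ C, u.im ≠ 0 := fun u hu hu0 =>
    hC u.re (by rwa [Complex.conj_eq_iff_re.mp (Complex.conj_eq_iff_im.mpr hu0)])
  have hU : IsOpen (sliceEmb J ⁻¹' Ω) := isOpen_sliceTopology_iff.mp hopen J hJ
  have hpreJ : sliceEmb J ⁻¹' (sliceEmb J '' C) = C := (sliceEmb_injective hJ).preimage_image C
  have hpreK : ∀ K ∈ SphereS, K ≠ J → K ≠ -J → sliceEmb K ⁻¹' (sliceEmb J '' C) = ∅ := by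
    refine fun K hK hKJ hKJ' => eq_empty_iff_forall_notMem.mpr ?_
    rintro w ⟨u, hu, huw⟩
    exact (eq_or_eq_neg_of_sliceEmb_eq hJ hK huw.symm (hCim u hu)).elim hKJ hKJ'
  have hT : IsOpen[sliceTopology] (sliceEmb J '' C) :=
    isOpen_sliceTopology_of_preimage (by rw [hpreJ]; exact hU.connectedComponentIn)
      fun K hK hKJ hKJ' => by rw [hpreK K hK hKJ hKJ']; exact isOpen_empty
  have hT' : IsOpen[sliceTopology] (Ω \ sliceEmb J '' C) :=
    isOpen_sliceTopology_of_preimage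
      (by rw [preimage_sdiff, hpreJ]; exact hU.sdiff_connectedComponentIn z)
      fun K hK hKJ hKJ' => by
        rw [preimage_sdiff, hpreK K hK hKJ hKJ', sdiff_empty]
        exact isOpen_sliceTopology_iff.mp hopen K hK
  refine @IsPreconnected.subset_left_of_subset_union Hq sliceTopology _ _ _ hT hT'
    disjoint_sdiff_right ?_ ⟨sliceEmb J z, hz, z, mem_connectedComponentIn hz, rfl⟩ hconn
  rw [union_sdiff_self]
  exact subset_union_right

lemma exists_ofReal_mem_connectedComponentIn {Ω : Set Hq}
    (hopen : IsOpen[sliceTopology] Ω) (hconn : @IsPreconnected Hq sliceTopology Ω)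
    {J : Hq} (hJ : J ∈ SphereS) {x : ℝ} (hx : (x : Hq) ∈ Ω) {z : ℂ} (hz : z ∈ sliceEmb J ⁻¹' Ω) :
    ∃ y : ℝ, (y : ℂ) ∈ connectedComponentIn (sliceEmb J ⁻¹' Ω) z := by
  by_contra! h
  obtain ⟨u, hu, hux⟩ := subset_sliceEmb_image_connectedComponentIn hopen hconn hJ hz h hx
  exact h x ((sliceEmb_eq_ofReal_iff hJ).mp hux ▸ hu)

lemma ofReal_mem_connectedComponentIn {Ω : Set Hq}
    (hreal : IsPreconnected ((fun x : ℝ => (x : Hq)) ⁻¹' Ω)) (J : Hq) {x y : ℝ}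
    (hx : (x : Hq) ∈ Ω) (hy : (y : Hq) ∈ Ω) :
    (y : ℂ) ∈ connectedComponentIn (sliceEmb J ⁻¹' Ω) x := by
  refine (hreal.image _ Complex.continuous_ofReal.continuousOn).subset_connectedComponentIn
    ⟨x, hx, rfl⟩ ?_ ⟨y, hy, rfl⟩
  rintro _ ⟨t, ht, rfl⟩
  simpa using ht

lemma frequently_eq_zero_of_ofReal {E : Type*} [Zero E] {g : ℂ → E} {x : ℝ} {V : Set ℂ}
    (hV : V ∈ 𝓝 (x : ℂ)) (hg : ∀ y : ℝ, (y : ℂ) ∈ V → g y = 0) :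
    ∃ᶠ w in 𝓝[≠] (x : ℂ), g w = 0 := by
  have htend : Tendsto (fun y : ℝ => (y : ℂ)) (𝓝[≠] x) (𝓝[≠] (x : ℂ)) :=
    Complex.continuous_ofReal.continuousWithinAt.tendsto_nhdsWithin
      fun _ hy => Complex.ofReal_injective.ne hy
  have hev : ∀ᶠ y : ℝ in 𝓝[≠] x, g y = 0 := eventually_nhdsWithin_of_eventually_nhds <|
    Filter.eventually_of_mem (Complex.continuous_ofReal.continuousAt.preimage_mem_nhds hV) hg
  exact htend.frequently hev.frequently

lemma SliceHolomorphicOn.sub {I : Hq} {f g : ℂ → Hq} {U : Set ℂ} (hf : SliceHolomorphicOn I f U)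
    (hg : SliceHolomorphicOn I g U) : SliceHolomorphicOn I (f - g) U := fun z hz => by
  obtain ⟨Lf, hLf, hCRf⟩ := hf z hz
  obtain ⟨Lg, hLg, hCRg⟩ := hg z hz
  refine ⟨Lf - Lg, hLf.sub hLg, ?_⟩
  rw [sub_apply, sub_apply, mul_sub, sub_add_sub_comm, hCRf, hCRg, sub_zero]

lemma SliceRegular.sub {f g : Hq → Hq} {Ω : Set Hq} (hf : SliceRegular f Ω)
    (hg : SliceRegular g Ω) : SliceRegular (f - g) Ω := fun J hJ => (hf J hJ).sub (hg J hJ)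

/-- `ℍ` as a complex normed space, `ℂ` acting by left multiplication through `ℂ_J`. -/
abbrev SliceSpace (_J : SphereS) : Type := Hq

namespace SliceSpace

variable (J : SphereS)

instance : NormedAddCommGroup (SliceSpace J) := inferInstanceAs (NormedAddCommGroup Hq)

instance : CompleteSpace (SliceSpace J) := inferInstanceAs (CompleteSpace Hq)

instance : Module ℂ (SliceSpace J) := Module.compHom Hq (sliceAlgHom J : ℂ →+* Hq)

lemma smul_def (z : ℂ) (q : SliceSpace J) : z • q = (sliceEmb J z * q : Hq) := by
  show sliceAlgHom J z * q = _
  rw [sliceAlgHom_apply]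

instance : NormedSpace ℂ (SliceSpace J) where
  norm_smul_le z q := by
    rw [smul_def, norm_mul, norm_sliceEmb J.2]

end SliceSpace

lemma apply_eq_sliceEmb_mul {J : Hq} (hJ : J ∈ SphereS) {L : ℂ →L[ℝ] Hq}
    (hL : L 1 + J * L Complex.I = 0) (w : ℂ) : L w = sliceEmb J w * L 1 := by
  have hLI : L Complex.I = J * L 1 := by
    have := congrArg (J * ·) hL
    simp only [mul_add, ← mul_assoc, mul_self_eq_neg_one_of_mem_sphereS hJ, neg_one_mul,
      mul_zero] at this
    exact (add_neg_eq_zero.mp this).symm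
  conv_lhs => rw [← Complex.re_add_im w]
  rw [← mul_one (w.re : ℂ), ← Complex.real_smul, ← Complex.real_smul, map_add, map_smul, map_smul,
    hLI, sliceEmb, add_mul, mul_assoc, coe_mul_eq_smul, coe_mul_eq_smul]

lemma SliceHolomorphicOn.differentiableOn {J : SphereS} {g : ℂ → SliceSpace J} {U : Set ℂ}
    (hg : SliceHolomorphicOn J g U) : DifferentiableOn ℂ g U := by
  intro z hz
  obtain ⟨L, hL, hCR⟩ := hg z hz
  have : HasFDerivAt g ((1 : ℂ →L[ℂ] ℂ).smulRight (L 1 : SliceSpace J)) z :=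
    .of_isLittleO <| hL.isLittleO.congr_left fun w => by
      rw [ContinuousLinearMap.smulRight_apply, one_apply_eq_self, SliceSpace.smul_def,
        apply_eq_sliceEmb_mul J.2 hCR]
  exact this.differentiableAt.differentiableWithinAt

lemma SliceHolomorphicOn.eqOn_zero_of_frequently {J : Hq} (hJ : J ∈ SphereS) {g : ℂ → Hq}
    {U : Set ℂ} (hg : SliceHolomorphicOn J g U) (hU : IsOpen U) {z₀ : ℂ} (hz₀ : z₀ ∈ U)
    (hfreq : ∃ᶠ z in 𝓝[≠] z₀, g z = 0) : EqOn g 0 (connectedComponentIn U z₀) :=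
  (((hg.differentiableOn (J := ⟨J, hJ⟩)).analyticOnNhd hU).mono
    (connectedComponentIn_subset U z₀)).eqOn_zero_of_preconnected_of_frequently_eq_zero
    isPreconnected_connectedComponentIn (mem_connectedComponentIn hz₀) hfreq

lemma SliceHolomorphicOn.eqOn_zero_of_ofReal {J : Hq} (hJ : J ∈ SphereS) {g : ℂ → Hq}
    {U : Set ℂ} (hg : SliceHolomorphicOn J g U) (hU : IsOpen U)
    (hg0 : ∀ x : ℝ, (x : ℂ) ∈ U → g x = 0) {x : ℝ} (hx : (x : ℂ) ∈ U) :
    EqOn g 0 (connectedComponentIn U x) :=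
  hg.eqOn_zero_of_frequently hJ hU hx (frequently_eq_zero_of_ofReal (hU.mem_nhds hx) hg0)

lemma SliceRegular.eqOn_zero_of_ofReal {F : Hq → Hq} {Ω : Set Hq}
    (hopen : IsOpen[sliceTopology] Ω) (hconn : @IsPreconnected Hq sliceTopology Ω)
    (hF : SliceRegular F Ω) {x : ℝ} (hx : (x : Hq) ∈ Ω)
    (hF0 : ∀ y : ℝ, (y : Hq) ∈ Ω → F y = 0) : EqOn F 0 Ω := by
  intro q hq
  obtain ⟨J, hJ, z, rfl⟩ := exists_sliceEmb_eq q
  obtain ⟨y, hy⟩ := exists_ofReal_mem_connectedComponentIn hopen hconn hJ hx hq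
  have hU : IsOpen (sliceEmb J ⁻¹' Ω) := isOpen_sliceTopology_iff.mp hopen J hJ
  refine (hF J hJ).eqOn_zero_of_ofReal hJ hU (fun t ht => ?_) (connectedComponentIn_subset _ _ hy)
    (connectedComponentIn_eq hy ▸ mem_connectedComponentIn hq)
  rw [mem_preimage, sliceEmb_ofReal] at ht
  rw [Function.comp_apply, sliceEmb_ofReal]
  exact hF0 t ht

theorem identity_principle_general (Ω : Set Hq)
    (hopen : @IsOpen Hq sliceTopology Ω)
    (hconn : @IsPreconnected Hq sliceTopology Ω)
    (hreal : IsPreconnected ((fun x : ℝ => (x : Hq)) ⁻¹' Ω))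
    (f g : Hq → Hq) (hf : SliceRegular f Ω) (hg : SliceRegular g Ω)
    (I : Hq) (hI : I ∈ SphereS) (S : Set ℂ)
    (z₀ : ℂ) (hz₀ : z₀ ∈ sliceEmb I ⁻¹' Ω) (hacc : AccPt z₀ (Filter.principal S))
    (heq : ∀ z ∈ S, f (sliceEmb I z) = g (sliceEmb I z)) :
    Set.EqOn f g Ω := by
  have hF : SliceRegular (f - g) Ω := hf.sub hg
  have hC₀ : EqOn ((f - g) ∘ sliceEmb I) 0 (connectedComponentIn (sliceEmb I ⁻¹' Ω) z₀) :=
    (hF I hI).eqOn_zero_of_frequently hI (isOpen_sliceTopology_iff.mp hopen I hI) hz₀ <|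
      (accPt_iff_frequently_nhdsNE.mp hacc).mono fun z hz => sub_eq_zero.mpr (heq z hz)
  suffices h0 : EqOn (f - g) 0 Ω from fun q hq => sub_eq_zero.mp (h0 hq)
  by_cases hΩ : ∃ x : ℝ, (x : Hq) ∈ Ω
  · obtain ⟨x, hx⟩ := hΩ
    obtain ⟨x₀, hx₀⟩ := exists_ofReal_mem_connectedComponentIn hopen hconn hI hx hz₀
    have hx₀Ω : (x₀ : Hq) ∈ Ω := by simpa using connectedComponentIn_subset _ _ hx₀
    refine hF.eqOn_zero_of_ofReal hopen hconn hx fun y hy => ?_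
    have := hC₀ (connectedComponentIn_eq hx₀ ▸ ofReal_mem_connectedComponentIn hreal I hx₀Ω hy)
    rwa [Function.comp_apply, sliceEmb_ofReal] at this
  · push Not at hΩ
    intro q hq
    obtain ⟨u, hu, rfl⟩ := subset_sliceEmb_image_connectedComponentIn hopen hconn hI hz₀
      (fun x hx => hΩ x (by simpa using connectedComponentIn_subset _ _ hx)) hq
    exact hC₀ hu

/-- Identity Principle on real-connected slice-domains. -/
theorem identity_principle (Ω : Set Hq)
    (hopen : @IsOpen Hq sliceTopology Ω)
    (hconn : @IsPreconnected Hq sliceTopology Ω)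
    (hne : Ω.Nonempty)
    (hreal : IsPreconnected ((fun x : ℝ => (x : Hq)) ⁻¹' Ω))
    (f g : Hq → Hq) (hf : SliceRegular f Ω) (hg : SliceRegular g Ω)
    (I : Hq) (hI : I ∈ SphereS) (S : Set ℂ) (hS : S ⊆ sliceEmb I ⁻¹' Ω)
    (z₀ : ℂ) (hz₀ : z₀ ∈ sliceEmb I ⁻¹' Ω) (hacc : AccPt z₀ (Filter.principal S))
    (heq : ∀ z ∈ S, f (sliceEmb I z) = g (sliceEmb I z)) :
    Set.EqOn f g Ω :=
  identity_principle_general Ω hopen hconn hreal f g hf hg I hI S z₀ hz₀ hacc heq
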